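/- In the maximum heterogeneity ES model, if the subgroup-specific heterogeneity parameters are chosen as φ_s² = K·δ_s² for a constant K > 0 common to all subgroups and SNPs, then the approximate Bayes Factor ∏_s √(δ_s²/(δ_s²+φ_s²))·exp((T_s²/2)·φ_s²/(δ_s²+φ_s²)) equals (1+K)^{−S/2}·exp((K/(2(1+K)))·Σ_s T_s²), and therefore ranks SNPs in the same order as the statistic Σ_s T_s². -/

import Mathlib

/-! With `φ² = K δ²` the shrinkage factor `φ² / (δ² + φ²)` equals `K / (1 + K)` whatever `δ` is,
so each study contributes the same constant `(1 + K)^(-1/2)` times `exp (K T² / (2 (1 + K)))`;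
the product over studies turns the exponents into a sum. -/

open Real Finset

/-- Single-study approximate Bayes Factor. -/
noncomputable def ABFsingle (T2 delta phi : ℝ) : ℝ :=
  Real.sqrt (delta ^ 2 / (delta ^ 2 + phi ^ 2)) *
    Real.exp (T2 / 2 * (phi ^ 2 / (delta ^ 2 + phi ^ 2)))

lemma ABFsingle_sqrt_mul {K : ℝ} (hK : 0 ≤ K) (T2 : ℝ) {delta : ℝ} (hdelta : delta ≠ 0) :
    ABFsingle T2 delta (√K * delta) = (1 + K) ^ (-1 / 2 : ℝ) * exp (K / (2 * (1 + K)) * T2) := by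
  have h1K : 0 < 1 + K := by linarith
  have hsum : delta ^ 2 + (√K * delta) ^ 2 = (1 + K) * delta ^ 2 := by
    rw [mul_pow, sq_sqrt hK]; ring
  have hdelta2 : delta ^ 2 ≠ 0 := pow_ne_zero 2 hdelta
  have hratio : delta ^ 2 / (delta ^ 2 + (√K * delta) ^ 2) = (1 + K)⁻¹ := by
    rw [hsum]; field_simp
  have hshrink : T2 / 2 * ((√K * delta) ^ 2 / (delta ^ 2 + (√K * delta) ^ 2))
      = K / (2 * (1 + K)) * T2 := by
    rw [hsum, mul_pow, sq_sqrt hK]; field_simp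
  rw [ABFsingle, hratio, hshrink, sqrt_eq_rpow, inv_rpow h1K.le, ← rpow_neg h1K.le]
  norm_num

lemma prod_const_mul_exp_mul {ι : Type*} (s : Finset ι) (c a : ℝ) (x : ι → ℝ) :
    ∏ i ∈ s, c * exp (a * x i) = c ^ s.card * exp (a * ∑ i ∈ s, x i) := by
  rw [prod_mul_distrib, prod_const, ← exp_sum, mul_sum]

lemma strictMono_const_mul_exp_mul {c a : ℝ} (hc : 0 < c) (ha : 0 < a) :
    StrictMono fun x : ℝ => c * exp (a * x) :=
  (Real.exp_strictMono.comp (strictMono_mul_left_of_pos ha)).const_mul hc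

theorem implicit_pvalue_prior_maxH_general (S : ℕ) (K : ℝ) (hK : 0 < K) :
    (∀ delta T : Fin S → ℝ, (∀ s, 0 < delta s) →
      (∏ s, ABFsingle ((T s) ^ 2) (delta s) (Real.sqrt K * delta s)) =
        (1 + K) ^ (-(S : ℝ) / 2) * Real.exp (K / (2 * (1 + K)) * ∑ s, (T s) ^ 2)) ∧
    StrictMono (fun x : ℝ => (1 + K) ^ (-(S : ℝ) / 2) * Real.exp (K / (2 * (1 + K)) * x)) := by
  have h1K : 0 < 1 + K := by linarith
  refine ⟨fun delta T hdelta => ?_,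
    strictMono_const_mul_exp_mul (rpow_pos_of_pos h1K _) (by positivity)⟩
  simp_rw [ABFsingle_sqrt_mul hK.le _ (hdelta _).ne']
  rw [prod_const_mul_exp_mul, card_univ, Fintype.card_fin, ← rpow_natCast, ← rpow_mul h1K.le]
  ring_nf

/-- Implicit p-value prior (maximum heterogeneity): with `φ_s² = K δ_s²`, the
maximum-heterogeneity ABF equals `(1+K)^(−S/2)·exp((K/(2(1+K)))·Σ_s T_s²)`, and
therefore ranks SNPs in the same order as `Σ_s T_s²`. -/
theorem implicit_pvalue_prior_maxH (S : ℕ) (hS : 1 ≤ S) (K : ℝ) (hK : 0 < K) :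
    (∀ delta T : Fin S → ℝ, (∀ s, 0 < delta s) →
      (∏ s, ABFsingle ((T s) ^ 2) (delta s) (Real.sqrt K * delta s)) =
        (1 + K) ^ (-(S : ℝ) / 2) * Real.exp (K / (2 * (1 + K)) * ∑ s, (T s) ^ 2)) ∧
    StrictMono (fun x : ℝ => (1 + K) ^ (-(S : ℝ) / 2) * Real.exp (K / (2 * (1 + K)) * x)) :=
  implicit_pvalue_prior_maxH_general S K hK
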